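/- For ε ∈ (0,1) and p ∈ (ε, 1), if D ≥ d(ε, p) where d is the binary relative entropy, then 1 − p ≥ (1−ε) · exp(−(D − ε log ε)/(1−ε)); equivalently, p ≤ 1 − (1−ε)·exp(−D/(1−ε) + (ε/(1−ε)) log ε). -/
import Mathlib


open Real

noncomputable def binaryRelEntropy (x y : ℝ) : ℝ :=
  x * Real.log (x / y) + (1 - x) * Real.log ((1 - x) / (1 - y))

theorem stmt_7 (ε p D : ℝ) (hε : ε ∈ Set.Ioo (0 : ℝ) 1) (hp : p ∈ Set.Ioo ε 1)
    (hD : binaryRelEntropy ε p ≤ D) :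
    (1 - ε) * Real.exp (-(D - ε * Real.log ε) / (1 - ε)) ≤ 1 - p ∧
    p ≤ 1 - (1 - ε) * Real.exp (-D / (1 - ε) + (ε / (1 - ε)) * Real.log ε) := by
  obtain ⟨hε0, hε1⟩ := hε
  obtain ⟨hpε, hp1⟩ := hp
  have hp0 : 0 < p := lt_trans hε0 hpε
  have h1e : (0:ℝ) < 1 - ε := by linarith
  have h1p : (0:ℝ) < 1 - p := by linarith
  have hlogp : Real.log p < 0 := Real.log_neg hp0 hp1
  have hdiv : Real.log (ε / p) = Real.log ε - Real.log p :=
    Real.log_div (ne_of_gt hε0) (ne_of_gt hp0)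
  have h2 : ε * Real.log ε ≤ ε * Real.log (ε / p) := by
    rw [hdiv]; nlinarith
  have h3 : (1 - ε) * Real.log ((1 - ε) / (1 - p)) ≤ D - ε * Real.log ε := by
    unfold binaryRelEntropy at hD
    linarith
  have h4 : Real.log ((1 - ε) / (1 - p)) ≤ (D - ε * Real.log ε) / (1 - ε) := by
    rw [le_div_iff₀ h1e]; linarith [h3]
  have h5 : (1 - ε) / (1 - p) ≤ Real.exp ((D - ε * Real.log ε) / (1 - ε)) := by
    calc (1 - ε) / (1 - p) = Real.exp (Real.log ((1 - ε) / (1 - p))) := by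
          rw [Real.exp_log (div_pos h1e h1p)]
      _ ≤ _ := Real.exp_le_exp.mpr h4
  have h6 : (1 - ε) * Real.exp (-(D - ε * Real.log ε) / (1 - ε)) ≤ 1 - p := by
    rw [div_le_iff₀ h1p] at h5
    have := mul_le_mul_of_nonneg_right h5
      (le_of_lt (Real.exp_pos (-(D - ε * Real.log ε) / (1 - ε))))
    have hy : Real.exp ((D - ε * Real.log ε) / (1 - ε)) *
        ((1 - p) * Real.exp (-(D - ε * Real.log ε) / (1 - ε))) = 1 - p := by
      rw [mul_comm (1 - p), ← mul_assoc, ← Real.exp_add]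
      have hx : (D - ε * Real.log ε) / (1 - ε) + -(D - ε * Real.log ε) / (1 - ε) = 0 := by
        ring
      rw [hx, Real.exp_zero, one_mul]
    rw [mul_assoc] at this
    rw [hy] at this
    exact this
  refine ⟨h6, ?_⟩
  have heq : -D / (1 - ε) + (ε / (1 - ε)) * Real.log ε
      = -(D - ε * Real.log ε) / (1 - ε) := by ring
  rw [heq]; linarith
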